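/- arXiv:2002.04422 — 7 statements merged into one kernel-verified Lean document; each statement's English description precedes it below -/
import Mathlib

section
/- The dimension difference dim O_{(n²,μ)} − dim O_μ (computed by the formula ½(v² − Σ μ̂_i² − ε(v − #odd parts))) is independent of the partition μ of v; it equals dim O_{(n²,1^v)} − dim O_{(1^v)}. -/
/-!
Prepending two rows of length `n` to a partition `μ` of `v` whose parts are at most `n` adds `2`
to each of the first `n` columns of `μ` and nothing else, and adds `2` or `0` odd parts according
to the parity of `n`. Hence `∑_{i<n} (μ̂ᵢ + 2)² − ∑_{i<n} μ̂ᵢ² = 4 ∑ μ̂ᵢ + 4n = 4v + 4n` and the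
parity correction are both independent of `μ`.
-/

open Finset

/-- The orbit dimension formula `dim O_p = ½(m² − Σ_i p̂_i² − ε(m − #{j : p_j odd}))`
for a partition `p` of `m` (parts indexed in `range m`), where `p̂` is the conjugate
partition. -/
noncomputable def dimO (ε : ℤ) (m : ℕ) (p : ℕ → ℕ) : ℚ :=
  ((m : ℚ) ^ 2
      - ∑ i ∈ Finset.range m, (((Finset.range m).filter (fun j => i + 1 ≤ p j)).card : ℚ) ^ 2
      - (ε : ℚ) * ((m : ℚ) - (((Finset.range m).filter (fun j => Odd (p j))).card : ℚ))) / 2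

/-- The `i`-th part `p̂ᵢ` of the conjugate partition (columns are indexed from `0`). -/
def colCount (m : ℕ) (p : ℕ → ℕ) (i : ℕ) : ℕ :=
  ((range m).filter fun j => i + 1 ≤ p j).card

def oddCount (m : ℕ) (p : ℕ → ℕ) : ℕ :=
  ((range m).filter fun j => Odd (p j)).card

/-- The partition written `(n², μ)` in exponent notation. -/
def prependPair (n : ℕ) (μ : ℕ → ℕ) : ℕ → ℕ :=
  fun i => if i < 2 then n else μ (i - 2)

lemma dimO_eq (ε : ℤ) (m : ℕ) (p : ℕ → ℕ) :
    dimO ε m p = ((m : ℚ) ^ 2 - ∑ i ∈ range m, (colCount m p i : ℚ) ^ 2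
      - ε * ((m : ℚ) - oddCount m p)) / 2 :=
  rfl

section Counting

variable (P : ℕ → Prop) [DecidablePred P]

lemma card_filter_prependPair (n k : ℕ) (μ : ℕ → ℕ) :
    ((range (k + 2)).filter fun j => P (prependPair n μ j)).card
      = (if P n then 2 else 0) + ((range k).filter fun j => P (μ j)).card := by
  have hshift : ∀ j, prependPair n μ (j + 1 + 1) = μ j := fun j => by simp [prependPair]
  rw [card_filter, card_filter, sum_range_succ', sum_range_succ']
  simp only [hshift]
  simp only [prependPair, show (0 : ℕ) + 1 < 2 by decide, Nat.ofNat_pos, if_true]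
  split_ifs <;> omega

lemma filter_range_eq_of_support {v k : ℕ} (hk : v ≤ k) (hP : ¬ P 0) {μ : ℕ → ℕ}
    (hsupp : ∀ j, v ≤ j → μ j = 0) :
    ((range k).filter fun j => P (μ j)) = (range v).filter fun j => P (μ j) := by
  ext j
  simp only [mem_filter, mem_range]
  constructor
  · rintro ⟨-, hj⟩
    refine ⟨?_, hj⟩
    by_contra! hvj
    exact hP (hsupp j hvj ▸ hj)
  · rintro ⟨hj, hPj⟩
    exact ⟨by omega, hPj⟩

lemma card_filter_prependPair_of_support {n v : ℕ} (hn : 0 < n) (hP : ¬ P 0) {μ : ℕ → ℕ}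
    (hsupp : ∀ j, v ≤ j → μ j = 0) :
    ((range (v + 2 * n)).filter fun j => P (prependPair n μ j)).card
      = (if P n then 2 else 0) + ((range v).filter fun j => P (μ j)).card := by
  obtain ⟨k, hk⟩ : ∃ k, v + 2 * n = k + 2 := ⟨v + 2 * n - 2, by omega⟩
  rw [hk, card_filter_prependPair, filter_range_eq_of_support P (by omega) hP hsupp]

end Counting

lemma colCount_prependPair {n v : ℕ} (hn : 0 < n) {μ : ℕ → ℕ}
    (hsupp : ∀ j, v ≤ j → μ j = 0) (i : ℕ) :
    colCount (v + 2 * n) (prependPair n μ) i = (if i < n then 2 else 0) + colCount v μ i := by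
  exact card_filter_prependPair_of_support (fun a => i + 1 ≤ a) hn (by omega) hsupp

lemma oddCount_prependPair {n v : ℕ} (hn : 0 < n) {μ : ℕ → ℕ}
    (hsupp : ∀ j, v ≤ j → μ j = 0) :
    oddCount (v + 2 * n) (prependPair n μ) = (if Odd n then 2 else 0) + oddCount v μ :=
  card_filter_prependPair_of_support Odd hn Nat.not_odd_zero hsupp

lemma colCount_eq_zero {v i : ℕ} {μ : ℕ → ℕ} (h : ∀ j < v, μ j ≤ i) : colCount v μ i = 0 := by
  refine card_eq_zero.mpr (filter_eq_empty_iff.mpr fun j hj => ?_)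
  have := h j (mem_range.mp hj)
  omega

/-- Counting the boxes of the Young diagram by columns. -/
lemma sum_colCount {v N : ℕ} {μ : ℕ → ℕ} (hN : ∀ j < v, μ j ≤ N) :
    ∑ i ∈ range N, colCount v μ i = ∑ j ∈ range v, μ j := by
  simp only [colCount, card_filter]
  rw [sum_comm]
  refine sum_congr rfl fun j hj => ?_
  have hjN := hN j (mem_range.mp hj)
  rw [← card_filter, show (range N).filter (fun i => i + 1 ≤ μ j) = range (μ j) by
    ext i; simp only [mem_filter, mem_range]; omega, card_range]

lemma sum_sq_colCount_prependPair {n v : ℕ} (hn : 0 < n) {μ : ℕ → ℕ}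
    (hsum : ∑ i ∈ range v, μ i = v) (hsupp : ∀ j, v ≤ j → μ j = 0) (hparts : ∀ j, μ j ≤ n) :
    ∑ i ∈ range (v + 2 * n), (colCount (v + 2 * n) (prependPair n μ) i : ℚ) ^ 2
      = ∑ i ∈ range v, (colCount v μ i : ℚ) ^ 2 + 4 * v + 4 * n := by
  have hμv : ∀ j < v, μ j ≤ v := fun j hj =>
    hsum ▸ single_le_sum (fun i _ => Nat.zero_le (μ i)) (mem_range.mpr hj)
  have hexpand : ∀ i, ((colCount (v + 2 * n) (prependPair n μ) i : ℕ) : ℚ) ^ 2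
      = (colCount v μ i : ℚ) ^ 2 + 4 * colCount v μ i + if i < n then 4 else 0 := by
    intro i
    rw [colCount_prependPair hn hsupp]
    split_ifs with hi
    · push_cast; ring
    · rw [colCount_eq_zero fun j _ => (hparts j).trans (not_lt.mp hi)]; simp
  have hsq : ∑ i ∈ range (v + 2 * n), (colCount v μ i : ℚ) ^ 2
      = ∑ i ∈ range v, (colCount v μ i : ℚ) ^ 2 :=
    eventually_constant_sum (fun i hi => by simp [colCount_eq_zero fun j hj => (hμv j hj).trans hi])
      (by omega)
  have hlin : ∑ i ∈ range (v + 2 * n), (colCount v μ i : ℚ) = v := by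
    exact_mod_cast (sum_colCount fun j _ => (hparts j).trans (by omega)).trans hsum
  have hconst : ∑ i ∈ range (v + 2 * n), (if i < n then (4 : ℚ) else 0) = 4 * n := by
    rw [← sum_filter, show (range (v + 2 * n)).filter (· < n) = range n by
      ext i; simp only [mem_filter, mem_range]; omega]
    simp [mul_comm]
  simp only [hexpand, sum_add_distrib, ← mul_sum, hsq, hlin, hconst]

lemma dimO_prependPair_sub_dimO {n v : ℕ} (hn : 0 < n) (ε : ℤ) {μ : ℕ → ℕ}
    (hsum : ∑ i ∈ range v, μ i = v) (hsupp : ∀ j, v ≤ j → μ j = 0) (hparts : ∀ j, μ j ≤ n) :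
    dimO ε (v + 2 * n) (prependPair n μ) - dimO ε v μ
      = (((v : ℚ) + 2 * n) ^ 2 - (v : ℚ) ^ 2 - (4 * v + 4 * n)
          - ε * (2 * n - if Odd n then 2 else 0)) / 2 := by
  rw [dimO_eq, dimO_eq, sum_sq_colCount_prependPair hn hsum hsupp hparts,
    oddCount_prependPair hn hsupp]
  push_cast
  split_ifs <;> ring

theorem dimO_diff_independent_general (n v : ℕ) (hn : 0 < n) (ε : ℤ)
    (μ : ℕ → ℕ) (hsum : ∑ i ∈ Finset.range v, μ i = v)
    (hsupp : ∀ i, v ≤ i → μ i = 0) (hparts : ∀ j, μ j ≤ n) :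
    dimO ε (v + 2 * n) (fun i => if i < 2 then n else μ (i - 2)) - dimO ε v μ
      = dimO ε (v + 2 * n) (fun i => if i < 2 then n else if i - 2 < v then 1 else 0)
        - dimO ε v (fun i => if i < v then 1 else 0) := by
  have hsum₁ : ∑ i ∈ range v, (if i < v then 1 else 0) = v := by
    rw [sum_congr rfl fun i hi => if_pos (mem_range.mp hi)]
    simp
  refine (dimO_prependPair_sub_dimO hn ε hsum hsupp hparts).trans
    (dimO_prependPair_sub_dimO hn ε hsum₁ (fun j hj => if_neg (by omega)) fun j => ?_).symm
  split_ifs <;> omega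

/-- The dimension difference `dim O_{(n²,μ)} − dim O_μ` is independent of the partition
`μ` of `v` (with parts ≤ n): it equals `dim O_{(n²,1^v)} − dim O_{(1^v)}`. -/
theorem dimO_diff_independent (n v : ℕ) (hn : 0 < n) (ε : ℤ) (hε : ε = 1 ∨ ε = -1)
    (μ : ℕ → ℕ) (hanti : Antitone μ) (hsum : ∑ i ∈ Finset.range v, μ i = v)
    (hsupp : ∀ i, v ≤ i → μ i = 0) (hparts : ∀ j, μ j ≤ n) :
    dimO ε (v + 2 * n) (fun i => if i < 2 then n else μ (i - 2)) - dimO ε v μ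
      = dimO ε (v + 2 * n) (fun i => if i < 2 then n else if i - 2 < v then 1 else 0)
        - dimO ε v (fun i => if i < v then 1 else 0) :=
  dimO_diff_independent_general n v hn ε μ hsum hsupp hparts
end

section
/- Let e, f, h be linear operators on the (d+1)-dimensional Q-vector space with basis w₀, …, w_d defined by e·w_i = (i+1)·w_{i+1} (with w_{d+1} := 0), f·w_i = 2(d−i+1)·w_{i−1} (with w_{−1} := 0), and h·w_i = (3i−2d)·w_i. Then these operators satisfy e²f − 2efe + fe² = −4e and f²e − 2fef + ef² = −4f, and [h,e] = 3e, [h,f] = −3f. -/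
/-!
`e` raises and `f` lowers the index of the basis by one, so for a diagonal operator
`D = diag(δ)` whose weights grow by `c` from one index to the next, `[D, e] = c • e` and
`[D, f] = -c • f`; with `h = diag(3i − 2d)` this gives `[h, e] = 3e` and `[h, f] = −3f`.
A direct computation shows that `[e, f] = diag(2(2i − d))` is diagonal with weights growing
by `4`, and `e²f − 2efe + fe² = [e, [e, f]] = −4e`; symmetrically `[f, [f, e]] = −4f`.
-/

open Matrix

/-- The operator `e` on `ℚ^{d+1}`: `e·w_i = (i+1)·w_{i+1}` (with `w_{d+1} := 0`). -/
def Emat (d : ℕ) : Matrix (Fin (d + 1)) (Fin (d + 1)) ℚ :=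
  fun j i => if (j : ℕ) = (i : ℕ) + 1 then ((i : ℕ) + 1 : ℚ) else 0

/-- The operator `f` on `ℚ^{d+1}`: `f·w_i = 2(d−i+1)·w_{i−1}` (with `w_{−1} := 0`). -/
def Fmat (d : ℕ) : Matrix (Fin (d + 1)) (Fin (d + 1)) ℚ :=
  fun j i => if (j : ℕ) + 1 = (i : ℕ) then 2 * ((d : ℚ) - (i : ℕ) + 1) else 0

/-- The operator `h` on `ℚ^{d+1}`: `h·w_i = (3i−2d)·w_i`. -/
def Hmat (d : ℕ) : Matrix (Fin (d + 1)) (Fin (d + 1)) ℚ :=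
  fun j i => if j = i then 3 * ((i : ℕ) : ℚ) - 2 * (d : ℚ) else 0

section Commutator

variable {R A : Type*} [Ring R] [Ring A] [Module R A]

theorem serre_relation_of_commutator {a b k : A} {c : R} (hab : a * b - b * a = k)
    (hka : k * a - a * k = c • a) :
    a * a * b - (2 : R) • (a * b * a) + b * (a * a) = -c • a := by
  rw [neg_smul, ← hka, ← hab, two_smul]
  noncomm_ring

end Commutator

section Diagonal

variable {n α : Type*} [Fintype n] [DecidableEq n] [CommRing α]

theorem diagonal_mul_sub_mul_diagonal_apply (δ : n → α) (M : Matrix n n α) (j i : n) :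
    (diagonal δ * M - M * diagonal δ) j i = (δ j - δ i) * M j i := by
  simp only [Matrix.sub_apply, diagonal_mul, mul_diagonal]
  ring

theorem diagonal_mul_sub_mul_diagonal_eq_smul {δ : n → α} {M : Matrix n n α} {c : α}
    (h : ∀ j i, M j i ≠ 0 → δ j - δ i = c) :
    diagonal δ * M - M * diagonal δ = c • M := by
  ext j i
  rw [diagonal_mul_sub_mul_diagonal_apply, Matrix.smul_apply, smul_eq_mul]
  by_cases hM : M j i = 0
  · simp [hM]
  · rw [h j i hM]

end Diagonal

theorem Emat_apply_ne_zero {d : ℕ} {j i : Fin (d + 1)} (h : Emat d j i ≠ 0) :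
    (j : ℕ) = i + 1 := by
  by_contra hji
  exact h (if_neg hji)

theorem Fmat_apply_ne_zero {d : ℕ} {j i : Fin (d + 1)} (h : Fmat d j i ≠ 0) :
    (j : ℕ) + 1 = i := by
  by_contra hji
  exact h (if_neg hji)

theorem Hmat_eq_diagonal (d : ℕ) :
    Hmat d = diagonal (fun i : Fin (d + 1) => 3 * ((i : ℕ) : ℚ) - 2 * d) := by
  ext j i
  rw [diagonal_apply]
  unfold Hmat
  split_ifs with h <;> simp [h]

theorem Emat_mul_Fmat (d : ℕ) :
    Emat d * Fmat d = diagonal (fun i : Fin (d + 1) => 2 * ((i : ℕ) : ℚ) * (d - i + 1)) := by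
  ext j i
  rw [mul_apply, diagonal_apply]
  obtain rfl | hji := eq_or_ne j i
  · rw [if_pos rfl]
    rcases j with ⟨_ | i, hi⟩
    · simp [Fmat]
    · rw [Fintype.sum_eq_single ⟨i, by omega⟩]
      · simp only [Emat, Fmat, if_true]
        push_cast
        ring
      · intro k hk
        refine mul_eq_zero_of_right _ (if_neg fun h => hk (Fin.ext ?_))
        simp only at h ⊢
        omega
  · rw [if_neg hji]
    refine Finset.sum_eq_zero fun k _ => by_contra fun hne => hji (Fin.ext ?_)
    have := Emat_apply_ne_zero (left_ne_zero_of_mul hne)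
    have := Fmat_apply_ne_zero (right_ne_zero_of_mul hne)
    omega

theorem Fmat_mul_Emat (d : ℕ) :
    Fmat d * Emat d = diagonal (fun i : Fin (d + 1) => 2 * ((d : ℚ) - i) * ((i : ℕ) + 1)) := by
  ext j i
  rw [mul_apply, diagonal_apply]
  obtain rfl | hji := eq_or_ne j i
  · rw [if_pos rfl]
    by_cases hjd : (j : ℕ) = d
    · rw [hjd, sub_self, mul_zero, zero_mul]
      refine Finset.sum_eq_zero fun k _ => mul_eq_zero_of_right _ (if_neg ?_)
      have := k.isLt
      omega
    · rw [Fintype.sum_eq_single ⟨j + 1, by omega⟩]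
      · simp only [Emat, Fmat, if_true]
        push_cast
        ring
      · intro k hk
        refine mul_eq_zero_of_right _ (if_neg fun h => hk (Fin.ext ?_))
        simp only at h ⊢
        omega
  · rw [if_neg hji]
    refine Finset.sum_eq_zero fun k _ => by_contra fun hne => hji (Fin.ext ?_)
    have := Fmat_apply_ne_zero (left_ne_zero_of_mul hne)
    have := Emat_apply_ne_zero (right_ne_zero_of_mul hne)
    omega

theorem diagonal_mul_Emat_sub_Emat_mul_diagonal {d : ℕ} {δ : Fin (d + 1) → ℚ} {c : ℚ}
    (hδ : ∀ j i : Fin (d + 1), (j : ℕ) = i + 1 → δ j - δ i = c) :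
    diagonal δ * Emat d - Emat d * diagonal δ = c • Emat d :=
  diagonal_mul_sub_mul_diagonal_eq_smul fun j i h => hδ j i (Emat_apply_ne_zero h)

theorem diagonal_mul_Fmat_sub_Fmat_mul_diagonal {d : ℕ} {δ : Fin (d + 1) → ℚ} {c : ℚ}
    (hδ : ∀ j i : Fin (d + 1), (i : ℕ) = j + 1 → δ j - δ i = c) :
    diagonal δ * Fmat d - Fmat d * diagonal δ = c • Fmat d :=
  diagonal_mul_sub_mul_diagonal_eq_smul fun j i h => hδ j i (Fmat_apply_ne_zero h).symm

theorem Emat_mul_Fmat_sub_Fmat_mul_Emat (d : ℕ) :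
    Emat d * Fmat d - Fmat d * Emat d =
      diagonal (fun i : Fin (d + 1) => 2 * (2 * ((i : ℕ) : ℚ) - d)) := by
  rw [Emat_mul_Fmat, Fmat_mul_Emat, diagonal_sub]
  congr 1 with i
  ring

theorem Fmat_mul_Emat_sub_Emat_mul_Fmat (d : ℕ) :
    Fmat d * Emat d - Emat d * Fmat d =
      diagonal (fun i : Fin (d + 1) => 2 * ((d : ℚ) - 2 * (i : ℕ))) := by
  rw [Emat_mul_Fmat, Fmat_mul_Emat, diagonal_sub]
  congr 1 with i
  ring

/-- The operators `e, f, h` satisfy the nonhomogeneous Serre relations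
`e²f − 2efe + fe² = −4e`, `f²e − 2fef + ef² = −4f`, and `[h,e] = 3e`, `[h,f] = −3f`. -/
theorem rank_one_relations (d : ℕ) :
    (Emat d * Emat d * Fmat d - (2 : ℚ) • (Emat d * Fmat d * Emat d)
        + Fmat d * (Emat d * Emat d) = (-4 : ℚ) • Emat d) ∧
    (Fmat d * Fmat d * Emat d - (2 : ℚ) • (Fmat d * Emat d * Fmat d)
        + Emat d * (Fmat d * Fmat d) = (-4 : ℚ) • Fmat d) ∧
    (Hmat d * Emat d - Emat d * Hmat d = (3 : ℚ) • Emat d) ∧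
    (Hmat d * Fmat d - Fmat d * Hmat d = (-3 : ℚ) • Fmat d) := by
  rw [Hmat_eq_diagonal]
  refine ⟨serre_relation_of_commutator (Emat_mul_Fmat_sub_Fmat_mul_Emat d)
      (diagonal_mul_Emat_sub_Emat_mul_diagonal ?_),
    serre_relation_of_commutator (Fmat_mul_Emat_sub_Emat_mul_Fmat d)
      (diagonal_mul_Fmat_sub_Fmat_mul_diagonal ?_),
    diagonal_mul_Emat_sub_Emat_mul_diagonal ?_, diagonal_mul_Fmat_sub_Fmat_mul_diagonal ?_⟩ <;>
  · intro j i h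
    simp only [h]
    push_cast
    ring
end

section
/- Define the polynomial P_{a,b,c}(y,D) = 2^{a+c} · ∏_{l=1}^{a}(D − (y − c + b − l)) · ∏_{k=1}^{b}(y − c + k) · ∏_{j=1}^{c}(D − (y − j)), for a,b,c ∈ ℕ with a ≤ b. If a finite family of distinct triples (a_i,b_i,c_i) with a_i ≤ b_i and a_i − b_i + c_i all equal to a fixed m, together with nonzero rational constants C_i, satisfies Σ_i C_i P_{a_i,b_i,c_i}(y,D) = 0 for all integers 0 ≤ y ≤ D and all sufficiently large D, then the family is empty. -/
/-!
For fixed `y`, each `P_{a,b,c}(y, D)` is a polynomial in `D` of degree `a + c = m + 2b` with leading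
coefficient `2^{a+c} ∏_{k=1}^{b} (y − c + k)`, so a relation that holds for all large `D` is an identity
of polynomials in `D`. Take the index with largest `b` and, among those, smallest `c`, and put `y := c`.
Then every other term either has smaller degree in `D`, or has the same `b`, a larger `c ≤ y + b`, and
hence a vanishing factor `y − c + k`; while the chosen term has leading coefficient `2^{a+c} b! ≠ 0`.
-/

/-- The polynomial
`P_{a,b,c}(y,D) = 2^{a+c} ∏_{l=1}^{a}(D − (y−c+b−l)) ∏_{k=1}^{b}(y−c+k) ∏_{j=1}^{c}(D − (y−j))`
evaluated at natural numbers `y, D`. -/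
def Ppoly (a b c y D : ℕ) : ℚ :=
  2 ^ (a + c)
    * (∏ l ∈ Finset.range a, ((D : ℚ) - ((y : ℚ) - (c : ℚ) + (b : ℚ) - ((l : ℚ) + 1))))
    * (∏ k ∈ Finset.range b, ((y : ℚ) - (c : ℚ) + ((k : ℚ) + 1)))
    * (∏ j ∈ Finset.range c, ((D : ℚ) - ((y : ℚ) - ((j : ℚ) + 1))))

open Polynomial Finset

theorem Polynomial.eq_zero_of_forall_eval_natCast_eq_zero {R : Type*} [CommRing R] [IsDomain R]
    [CharZero R] (p : R[X]) (n₀ : ℕ) (h : ∀ n ≥ n₀, p.eval (n : R) = 0) : p = 0 := by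
  apply eq_zero_of_infinite_isRoot
  refine ((Set.Ici_infinite n₀).image Nat.cast_injective.injOn).mono ?_
  rintro _ ⟨n, hn, rfl⟩
  exact h n hn

theorem prod_range_sub_add_one_eq_zero_iff (y c b : ℕ) :
    ∏ k ∈ range b, ((y : ℚ) - c + (k + 1)) = 0 ↔ y < c ∧ c ≤ y + b := by
  have hroot : ∀ k : ℕ, (y : ℚ) - c + (k + 1) = 0 ↔ c = y + k + 1 := fun k => by
    rw [sub_add_eq_add_sub, sub_eq_zero, eq_comm]
    exact_mod_cast Iff.rfl
  simp only [prod_eq_zero_iff, mem_range, hroot]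
  constructor
  · rintro ⟨k, hk, rfl⟩
    omega
  · rintro ⟨hyc, hcb⟩
    exact ⟨c - y - 1, by omega, by omega⟩

noncomputable def PpolyMonicInD (a b c y : ℕ) : ℚ[X] :=
  (∏ l ∈ range a, (X - C ((y : ℚ) - c + b - (l + 1)))) * ∏ j ∈ range c, (X - C ((y : ℚ) - (j + 1)))

theorem PpolyMonicInD_monic (a b c y : ℕ) : (PpolyMonicInD a b c y).Monic :=
  (monic_prod_X_sub_C _ _).mul (monic_prod_X_sub_C _ _)

theorem natDegree_PpolyMonicInD (a b c y : ℕ) : (PpolyMonicInD a b c y).natDegree = a + c := by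
  rw [PpolyMonicInD, (monic_prod_X_sub_C _ _).natDegree_mul (monic_prod_X_sub_C _ _),
    natDegree_finsetProd_X_sub_C_eq_card, natDegree_finsetProd_X_sub_C_eq_card, card_range,
    card_range]

/-- `Ppoly a b c y D` as a polynomial in `D`, for fixed `y`. -/
noncomputable def PpolyInD (a b c y : ℕ) : ℚ[X] :=
  C (2 ^ (a + c) * ∏ k ∈ range b, ((y : ℚ) - c + (k + 1))) * PpolyMonicInD a b c y

theorem eval_PpolyInD (a b c y D : ℕ) : (PpolyInD a b c y).eval (D : ℚ) = Ppoly a b c y D := by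
  simp only [PpolyInD, PpolyMonicInD, Ppoly, eval_mul, eval_C, eval_prod, eval_sub, eval_X]
  ring

theorem coeff_PpolyInD_add (a b c y : ℕ) :
    (PpolyInD a b c y).coeff (a + c) = 2 ^ (a + c) * ∏ k ∈ range b, ((y : ℚ) - c + (k + 1)) := by
  rw [PpolyInD, coeff_C_mul, ← natDegree_PpolyMonicInD a b c y,
    (PpolyMonicInD_monic a b c y).coeff_natDegree, mul_one]

theorem coeff_PpolyInD_add_ne_zero (a b c : ℕ) : (PpolyInD a b c c).coeff (a + c) ≠ 0 := by
  rw [coeff_PpolyInD_add, ne_eq, mul_eq_zero, prod_range_sub_add_one_eq_zero_iff, not_or]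
  exact ⟨pow_ne_zero _ two_ne_zero, by omega⟩

theorem coeff_PpolyInD_eq_zero {a b c a₀ B c₀ : ℕ} (hm : (a : ℤ) - b + c = (a₀ : ℤ) - B + c₀)
    (ha₀ : a₀ ≤ B) (hb : b ≤ B) (hc : b = B → c₀ < c) :
    (PpolyInD a b c c₀).coeff (a₀ + c₀) = 0 := by
  rcases hb.lt_or_eq with hlt | rfl
  · apply coeff_eq_zero_of_natDegree_lt
    calc (PpolyInD a b c c₀).natDegree ≤ (PpolyMonicInD a b c c₀).natDegree := natDegree_C_mul_le _ _
      _ = a + c := natDegree_PpolyMonicInD a b c c₀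
      _ < a₀ + c₀ := by omega
  · have hcb : c ≤ c₀ + b := by omega
    rw [PpolyInD, coeff_C_mul, (prod_range_sub_add_one_eq_zero_iff c₀ c b).2 ⟨hc rfl, hcb⟩,
      mul_zero, zero_mul]

/-- Faithfulness: if a finite family of distinct triples `(aᵢ,bᵢ,cᵢ)` with `aᵢ ≤ bᵢ` and
`aᵢ − bᵢ + cᵢ = m`, with nonzero coefficients `Cᵢ`, satisfies
`Σᵢ Cᵢ P_{aᵢ,bᵢ,cᵢ}(y,D) = 0` for all `0 ≤ y ≤ D` and all sufficiently large `D`,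
then the family is empty. -/
theorem Ppoly_linear_independence (ι : Type) (s : Finset ι)
    (a b c : ι → ℕ) (C : ι → ℚ) (m : ℤ)
    (hab : ∀ i ∈ s, a i ≤ b i)
    (hm : ∀ i ∈ s, (a i : ℤ) - (b i : ℤ) + (c i : ℤ) = m)
    (hC : ∀ i ∈ s, C i ≠ 0)
    (hdist : ∀ i ∈ s, ∀ j ∈ s, (a i, b i, c i) = (a j, b j, c j) → i = j)
    (hvan : ∃ D₀ : ℕ, ∀ D : ℕ, D₀ ≤ D → ∀ y : ℕ, y ≤ D →
      ∑ i ∈ s, C i * Ppoly (a i) (b i) (c i) y D = 0) :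
    s = ∅ := by
  by_contra hne
  obtain ⟨D₀, hvan⟩ := hvan
  obtain ⟨iB, hiB, hbmax⟩ := s.exists_max_image b (nonempty_iff_ne_empty.mpr hne)
  obtain ⟨i₀, hi₀, hcmin⟩ := (s.filter (b · = b iB)).exists_min_image c ⟨iB, by simp [hiB]⟩
  obtain ⟨hi₀s, hbi₀⟩ := mem_filter.mp hi₀
  set P := ∑ i ∈ s, C i • PpolyInD (a i) (b i) (c i) (c i₀)
  have hP : P = 0 := by
    refine P.eq_zero_of_forall_eval_natCast_eq_zero (max D₀ (c i₀)) fun D hD => ?_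
    simp only [P, eval_finsetSum, eval_smul, eval_PpolyInD, smul_eq_mul]
    exact hvan D (le_of_max_le_left hD) _ (le_of_max_le_right hD)
  have hothers : ∀ i ∈ s, i ≠ i₀ →
      (C i • PpolyInD (a i) (b i) (c i) (c i₀)).coeff (a i₀ + c i₀) = 0 := by
    intro i hi hii₀
    rw [coeff_smul, coeff_PpolyInD_eq_zero ((hm i hi).trans (hm i₀ hi₀s).symm) (hab i₀ hi₀s)
      (hbi₀ ▸ hbmax i hi) fun hbi => ?_, smul_zero]
    refine (hcmin i (mem_filter.mpr ⟨hi, hbi.trans hbi₀⟩)).lt_of_ne fun hci => hii₀ ?_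
    have hai : a i = a i₀ := by have := hm i hi; have := hm i₀ hi₀s; omega
    exact hdist i hi i₀ hi₀s (by rw [hai, hbi, hci])
  have hcoeff : P.coeff (a i₀ + c i₀) =
      C i₀ * (PpolyInD (a i₀) (b i₀) (c i₀) (c i₀)).coeff (a i₀ + c i₀) := by
    rw [finsetSum_coeff, sum_eq_single_of_mem i₀ hi₀s hothers, coeff_smul, smul_eq_mul]
  rw [hP, coeff_zero] at hcoeff
  exact mul_ne_zero (hC i₀ hi₀s) (coeff_PpolyInD_add_ne_zero _ _ _) hcoeff.symm
end

section
/- Let t be a linear operator on a Q-vector space satisfying the identity (1/(n!)) eⁿ fⁿ |_top = (t+d)(t+d−2)⋯(t+d−2(n−1)) for all n, where e, f, t arise from the sl₂-type action e·w_i = (i+1)w_{i+1}, f·w_i = 2(d−i+1)w_{i−1} on Q^{d+1} with t = ef − h, h·w_i = (3i−2d)w_i. Then t satisfies the polynomial identity (t − d)(t − d + 2)⋯(t + d − 2)(t + d) = 0 on the subspace spanned by w_d, and more generally the operator (ef − h) on span(w_d) satisfies ∏_{k=0}^{d} ((ef − h) + d − 2k) = 0. -/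
open Matrix Polynomial

/-!
`w_d` is an eigenvector of `t = ef − h` with eigenvalue `d`: `f` lowers it to `2·w_{d−1}`, `e`
raises that back to `2d·w_d`, and `h·w_d = d·w_d`. Hence every polynomial `p(t)` acts on
`span(w_d)` as the scalar `p(d)`, and the product vanishes at `d` through its factor `k = d`.
-/

theorem Matrix.aeval_mulVec_of_mulVec_eq_smul {n R : Type*} [Fintype n] [DecidableEq n]
    [CommRing R] {A : Matrix n n R} {v : n → R} {μ : R} (h : A *ᵥ v = μ • v) (p : R[X]) :
    aeval A p *ᵥ v = p.eval μ • v := by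
  rw [← toLinAlgEquiv'_apply, ← aeval_algHom_apply]
  exact Module.End.aeval_apply_of_mem_apply_eq_smul h

theorem Emat_mulVec_single {d : ℕ} (i : Fin d) :
    Emat d *ᵥ Pi.single i.castSucc 1 = (((i : ℕ) : ℚ) + 1) • Pi.single i.succ 1 := by
  ext j
  simp [Emat, Pi.single_apply, Fin.ext_iff]

theorem Fmat_mulVec_single_zero (d : ℕ) : Fmat d *ᵥ Pi.single 0 1 = 0 := by
  ext j
  simp [Fmat]

theorem Fmat_mulVec_single_succ {d : ℕ} (i : Fin d) :
    Fmat d *ᵥ Pi.single i.succ 1 = (2 * ((d : ℚ) - i)) • Pi.single i.castSucc 1 := by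
  ext j
  simp [Fmat, Pi.single_apply, Fin.ext_iff, sub_add_eq_sub_sub]

theorem Hmat_mulVec_single {d : ℕ} (i : Fin (d + 1)) :
    Hmat d *ᵥ Pi.single i 1 = (3 * ((i : ℕ) : ℚ) - 2 * d) • Pi.single i 1 := by
  ext j
  simp [Hmat, Pi.single_apply]

theorem Emat_mul_Fmat_mulVec_single {d : ℕ} (i : Fin (d + 1)) :
    (Emat d * Fmat d) *ᵥ Pi.single i 1 = (2 * ((i : ℕ) : ℚ) * (d - i + 1)) • Pi.single i 1 := by
  rw [← mulVec_mulVec]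
  induction i using Fin.cases with
  | zero =>
    rw [Fmat_mulVec_single_zero, mulVec_zero]
    simp
  | succ i =>
    cases d with
    | zero => exact i.elim0
    | succ d =>
      rw [Fmat_mulVec_single_succ, mulVec_smul, Emat_mulVec_single, smul_smul, Fin.val_succ]
      congr 1
      push_cast
      ring

theorem Emat_mul_Fmat_sub_Hmat_mulVec_single_last (d : ℕ) :
    (Emat d * Fmat d - Hmat d) *ᵥ Pi.single (Fin.last d) 1 = (d : ℚ) • Pi.single (Fin.last d) 1 := by
  rw [sub_mulVec, Emat_mul_Fmat_mulVec_single, Hmat_mulVec_single, ← sub_smul, Fin.val_last]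
  congr 1
  ring

/-- The operator `t = ef − h` satisfies `(t−d)(t−d+2)⋯(t+d−2)(t+d) = 0` on the subspace
spanned by `w_d`, i.e. `∏_{k=0}^{d} (t + d − 2k)` annihilates `span(w_d)`. -/
theorem t_polynomial_identity (d : ℕ) :
    ∀ x ∈ Submodule.span ℚ {Pi.single (Fin.last d) (1 : ℚ)},
      (Polynomial.aeval (Emat d * Fmat d - Hmat d)
          (∏ k ∈ Finset.range (d + 1),
            (Polynomial.X + Polynomial.C ((d : ℚ) - 2 * (k : ℚ))))).mulVec x = 0 := by
  have root :
      (∏ k ∈ Finset.range (d + 1), (X + C ((d : ℚ) - 2 * (k : ℚ)))).eval (d : ℚ) = 0 := by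
    rw [eval_prod]
    refine Finset.prod_eq_zero (Finset.self_mem_range_succ d) ?_
    rw [eval_add, eval_X, eval_C]
    ring
  intro x hx
  obtain ⟨c, rfl⟩ := Submodule.mem_span_singleton.mp hx
  rw [mulVec_smul, aeval_mulVec_of_mulVec_eq_smul (Emat_mul_Fmat_sub_Hmat_mulVec_single_last d),
    root, zero_smul, smul_zero]
end

section
/- Define a relation ⪯ on the set Θ of n×n centrosymmetric matrices with ℕ entries by A ⪯ B iff Σ_{r≤i, s≥j} a_{rs} ≤ Σ_{r≤i, s≥j} b_{rs} for all i < j, and the refinement A ⊑ B iff A ⪯ B, ro(A) = ro(B), and co(A) = co(B). Then ⊑ is a partial order on Θ (reflexive, transitive, and antisymmetric). -/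
open Matrix

/-- The set `Θ` of `n×n` centrosymmetric matrices with `ℕ` entries. -/
def Theta (n : ℕ) := {A : Matrix (Fin n) (Fin n) ℕ // ∀ i j, A i j = A i.rev j.rev}

/-- The partial sum `Σ_{r ≤ i, s ≥ j} a_{rs}`. -/
def psum {n : ℕ} (A : Matrix (Fin n) (Fin n) ℕ) (i j : Fin n) : ℕ :=
  ∑ r ∈ Finset.univ.filter (fun r => r ≤ i), ∑ s ∈ Finset.univ.filter (fun s => j ≤ s), A r s

/-- `A ⪯ B` iff all partial sums `Σ_{r≤i, s≥j}` with `i < j` of `A` are at most those of `B`. -/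
def Preceq {n : ℕ} (A B : Theta n) : Prop :=
  ∀ i j : Fin n, i < j → psum A.1 i j ≤ psum B.1 i j

/-- The refinement `A ⊑ B`: `A ⪯ B` with equal row sums and equal column sums. -/
def Sqsubseteq {n : ℕ} (A B : Theta n) : Prop :=
  Preceq A B ∧ (∀ i, ∑ j, A.1 i j = ∑ j, B.1 i j) ∧ (∀ j, ∑ i, A.1 i j = ∑ i, B.1 i j)

/-!
For antisymmetry, `A ⊑ B ⊑ A` forces equal partial sums `Σ_{r ≤ i, s ≥ j}` for all `i < j`.
Peeling off prefix sums in `r` and then suffix sums in `s` recovers every entry strictly above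
the diagonal, centrosymmetry `a_{ij} = a_{n+1-i, n+1-j}` transports these to the entries below
it, and the row sums then determine the diagonal.
-/

open Finset

section PrefixSums

variable {α M : Type*} [PartialOrder α] [AddCancelCommMonoid M]

theorem eq_of_sum_Iic_eq [LocallyFiniteOrderBot α] [WellFoundedLT α] {G H : α → M} {m : α}
    (h : ∀ t < m, ∑ u ∈ Iic t, G u = ∑ u ∈ Iic t, H u) : ∀ t < m, G t = H t := by
  classical
  intro t
  induction t using WellFoundedLT.induction with
  | ind t ih =>
    intro ht
    have below : ∑ u ∈ Iio t, G u = ∑ u ∈ Iio t, H u :=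
      sum_congr rfl fun u hu => ih u (mem_Iio.mp hu) ((mem_Iio.mp hu).trans ht)
    have total := h t ht
    rw [← Iio_insert, sum_insert notMem_Iio_self, sum_insert notMem_Iio_self, below] at total
    exact add_right_cancel total

theorem eq_of_sum_Ici_eq [LocallyFiniteOrderTop α] [WellFoundedGT α] {G H : α → M} {m : α}
    (h : ∀ t, m < t → ∑ u ∈ Ici t, G u = ∑ u ∈ Ici t, H u) : ∀ t, m < t → G t = H t :=
  fun t ht => eq_of_sum_Iic_eq (α := αᵒᵈ) (G := G ∘ OrderDual.ofDual) (H := H ∘ OrderDual.ofDual)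
    (m := OrderDual.toDual m) (fun s hs => by
      rw [← OrderDual.toDual_ofDual s, Iic_toDual, sum_map, sum_map]
      exact h _ hs) (OrderDual.toDual t) ht

end PrefixSums

theorem psum_eq_sum_Iic_Ici {n : ℕ} (A : Matrix (Fin n) (Fin n) ℕ) (i j : Fin n) :
    psum A i j = ∑ r ∈ Iic i, ∑ s ∈ Ici j, A r s := by
  rw [psum, filter_ge_eq_Iic, filter_le_eq_Ici]

theorem eq_above_diag_of_psum_eq {n : ℕ} {A B : Matrix (Fin n) (Fin n) ℕ}
    (h : ∀ i j, i < j → psum A i j = psum B i j) : ∀ i j : Fin n, i < j → A i j = B i j := by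
  have tails : ∀ i j : Fin n, i < j → ∑ s ∈ Ici j, A i s = ∑ s ∈ Ici j, B i s := fun i j =>
    eq_of_sum_Iic_eq (G := fun r => ∑ s ∈ Ici j, A r s) (H := fun r => ∑ s ∈ Ici j, B r s)
      (fun t ht => by simpa only [psum_eq_sum_Iic_Ici] using h t j ht) i
  exact fun i => eq_of_sum_Ici_eq (tails i)

theorem Matrix.eq_of_offDiag_eq_of_row_sum_eq {ι M : Type*} [Fintype ι] [DecidableEq ι]
    [AddCancelCommMonoid M] {A B : Matrix ι ι M} (hoff : ∀ i j, i ≠ j → A i j = B i j)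
    (hrow : ∀ i, ∑ j, A i j = ∑ j, B i j) : A = B := by
  ext i j
  obtain rfl | hij := eq_or_ne i j
  · have rest : ∑ k ∈ univ.erase i, A i k = ∑ k ∈ univ.erase i, B i k :=
      sum_congr rfl fun k hk => hoff i k (ne_of_mem_erase hk).symm
    have total := hrow i
    rw [← add_sum_erase _ _ (mem_univ i), ← add_sum_erase _ _ (mem_univ i), rest] at total
    exact add_right_cancel total
  · exact hoff i j hij

theorem Theta.eq_of_psum_eq_of_row_sum_eq {n : ℕ} {A B : Theta n}
    (hpsum : ∀ i j, i < j → psum A.1 i j = psum B.1 i j)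
    (hrow : ∀ i, ∑ j, A.1 i j = ∑ j, B.1 i j) : A = B := by
  have above := eq_above_diag_of_psum_eq hpsum
  refine Subtype.ext (Matrix.eq_of_offDiag_eq_of_row_sum_eq (fun i j hij => ?_) hrow)
  obtain hlt | hgt := hij.lt_or_gt
  · exact above i j hlt
  · rw [A.2, B.2]
    exact above _ _ (Fin.rev_lt_rev.mpr hgt)

theorem Sqsubseteq.refl {n : ℕ} (A : Theta n) : Sqsubseteq A A :=
  ⟨fun _ _ _ => le_rfl, fun _ => rfl, fun _ => rfl⟩

theorem Sqsubseteq.trans {n : ℕ} {A B C : Theta n} (hAB : Sqsubseteq A B)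
    (hBC : Sqsubseteq B C) : Sqsubseteq A C :=
  ⟨fun i j hij => (hAB.1 i j hij).trans (hBC.1 i j hij),
    fun i => (hAB.2.1 i).trans (hBC.2.1 i), fun j => (hAB.2.2 j).trans (hBC.2.2 j)⟩

theorem Sqsubseteq.antisymm {n : ℕ} {A B : Theta n} (hAB : Sqsubseteq A B)
    (hBA : Sqsubseteq B A) : A = B :=
  Theta.eq_of_psum_eq_of_row_sum_eq (fun i j hij => (hAB.1 i j hij).antisymm (hBA.1 i j hij))
    hAB.2.1

/-- `⊑` is a partial order on `Θ`: reflexive, transitive and antisymmetric. -/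
theorem sqsubseteq_partial_order (n : ℕ) :
    (∀ A : Theta n, Sqsubseteq A A) ∧
    (∀ A B C : Theta n, Sqsubseteq A B → Sqsubseteq B C → Sqsubseteq A C) ∧
    (∀ A B : Theta n, Sqsubseteq A B → Sqsubseteq B A → A = B) :=
  ⟨Sqsubseteq.refl, fun _ _ _ => Sqsubseteq.trans, fun _ _ => Sqsubseteq.antisymm⟩
end

section
/- Let n = 2r+1 be odd and θ(i) = n−i. In U(sl_n), with e_{i,θ} = e_i + f_{θ(i)}, the nonhomogeneous Serre relation holds for the middle pair: e_{r,θ}² e_{r+1,θ} − 2 e_{r,θ} e_{r+1,θ} e_{r,θ} + e_{r+1,θ} e_{r,θ}² = −4 e_{r,θ} (note θ(r) = r+1, so c_{r,r+1} = −1 and r = θ(r+1)). -/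
/-!
The Serre polynomial `u²v − 2uvu + vu²` is `ad(u)² v`. Expanding `⁅x, ⁅x, y⁆⁆` bilinearly for
`x = e₁ + f₂`, `y = e₂ + f₁`, the pure terms `ad(e₁)² e₂` and `ad(f₂)² f₁` vanish by the homogeneous
Serre relations; since `e₁` and `f₂` commute, Jacobi reduces each mixed term to the action of
`h₁` or `h₂` on `e₁` or `f₂`, and the Cartan integers add up to `−4` on both.
-/

/-- The Cartan matrix of type `A_{n-1}`: `c_{ij} = 2δ_{ij} − δ_{i,j+1} − δ_{i,j−1}`. -/
def cartan (i j : ℕ) : ℤ :=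
  2 * (if i = j then 1 else 0) - (if i = j + 1 then 1 else 0) - (if j = i + 1 then 1 else 0)

theorem cartan_self (i : ℕ) : cartan i i = 2 := by
  simp [cartan]

theorem cartan_succ_right (i : ℕ) : cartan i (i + 1) = -1 := by
  simp [cartan]
  omega

theorem cartan_succ_left (i : ℕ) : cartan (i + 1) i = -1 := by
  simp [cartan]
  omega

theorem serre_eq_lie_lie {R : Type*} [Ring R] (u v : R) :
    u * u * v - 2 * (u * v * u) + v * (u * u) = ⁅u, ⁅u, v⁆⁆ := by
  simp only [Ring.lie_def]
  noncomm_ring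

theorem lie_lie_add_eq_neg_four_smul {L : Type*} [LieRing L] {e₁ e₂ f₁ f₂ h₁ h₂ : L}
    (he₁f₂ : ⁅e₁, f₂⁆ = 0) (he₁f₁ : ⁅e₁, f₁⁆ = h₁) (he₂f₂ : ⁅e₂, f₂⁆ = h₂)
    (hh₁e₁ : ⁅h₁, e₁⁆ = 2 • e₁) (hh₂e₁ : ⁅h₂, e₁⁆ = -e₁)
    (hh₁f₂ : ⁅h₁, f₂⁆ = f₂) (hh₂f₂ : ⁅h₂, f₂⁆ = -(2 • f₂))
    (hserre_e : ⁅e₁, ⁅e₁, e₂⁆⁆ = 0) (hserre_f : ⁅f₂, ⁅f₂, f₁⁆⁆ = 0) :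
    ⁅e₁ + f₂, ⁅e₁ + f₂, e₂ + f₁⁆⁆ = -(4 • (e₁ + f₂)) := by
  have hf₂e₂ : ⁅f₂, e₂⁆ = -h₂ := by rw [← lie_skew, he₂f₂]
  have hbracket : ⁅e₁ + f₂, e₂ + f₁⁆ = ⁅e₁, e₂⁆ + ⁅f₂, f₁⁆ + (h₁ - h₂) := by
    simp only [add_lie, lie_add, he₁f₁, hf₂e₂]
    abel
  have he₁h₁ : ⁅e₁, h₁⁆ = -(2 • e₁) := by rw [← lie_skew, hh₁e₁]
  have he₁h₂ : ⁅e₁, h₂⁆ = e₁ := by rw [← lie_skew, hh₂e₁, neg_neg]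
  have hf₂h₁ : ⁅f₂, h₁⁆ = -f₂ := by rw [← lie_skew, hh₁f₂]
  have hf₂h₂ : ⁅f₂, h₂⁆ = 2 • f₂ := by rw [← lie_skew, hh₂f₂, neg_neg]
  have he₁f₂f₁ : ⁅e₁, ⁅f₂, f₁⁆⁆ = -f₂ := by
    rw [leibniz_lie, he₁f₂, zero_lie, he₁f₁, hf₂h₁, zero_add]
  have hf₂e₁e₂ : ⁅f₂, ⁅e₁, e₂⁆⁆ = -e₁ := by
    rw [leibniz_lie, ← lie_skew f₂ e₁, he₁f₂, neg_zero, zero_lie, hf₂e₂, lie_neg, he₁h₂, zero_add]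
  rw [hbracket]
  simp only [add_lie, lie_add, lie_sub, hserre_e, hserre_f, he₁f₂f₁, hf₂e₁e₂, he₁h₁, he₁h₂,
    hf₂h₁, hf₂h₂]
  abel

theorem middle_nonhomogeneous_serre_general (n r : ℕ) (hr : n = 2 * r + 1) (hr1 : 1 ≤ r)
    (R : Type) [Ring R] [Algebra ℚ R] (e f h : ℕ → R)
    (hhe : ∀ i j, 1 ≤ i → i ≤ n - 1 → 1 ≤ j → j ≤ n - 1 →
      h i * e j - e j * h i = ((cartan i j : ℚ)) • e j)
    (hhf : ∀ i j, 1 ≤ i → i ≤ n - 1 → 1 ≤ j → j ≤ n - 1 →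
      h i * f j - f j * h i = (-(cartan i j : ℚ)) • f j)
    (hef : ∀ i j, 1 ≤ i → i ≤ n - 1 → 1 ≤ j → j ≤ n - 1 →
      e i * f j - f j * e i = if i = j then h i else 0)
    (hserre_e : ∀ i j, 1 ≤ i → i ≤ n - 1 → 1 ≤ j → j ≤ n - 1 → cartan i j = -1 →
      e i * e i * e j - 2 * (e i * e j * e i) + e j * (e i * e i) = 0)
    (hserre_f : ∀ i j, 1 ≤ i → i ≤ n - 1 → 1 ≤ j → j ≤ n - 1 → cartan i j = -1 →
      f i * f i * f j - 2 * (f i * f j * f i) + f j * (f i * f i) = 0) :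
    (e r + f (r + 1)) * (e r + f (r + 1)) * (e (r + 1) + f r)
      - 2 * ((e r + f (r + 1)) * (e (r + 1) + f r) * (e r + f (r + 1)))
      + (e (r + 1) + f r) * ((e r + f (r + 1)) * (e r + f (r + 1)))
      = -(4 * (e r + f (r + 1))) := by
  let _ : LieRing R := LieRing.ofAssociativeRing
  have h₁ : 1 ≤ r + 1 := by omega
  have hn₀ : r ≤ n - 1 := by omega
  have hn₁ : r + 1 ≤ n - 1 := by omega
  rw [serre_eq_lie_lie, lie_lie_add_eq_neg_four_smul (h₁ := h r) (h₂ := h (r + 1))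
    (by rw [Ring.lie_def, hef r (r + 1) hr1 hn₀ h₁ hn₁, if_neg (by omega)])
    (by rw [Ring.lie_def, hef r r hr1 hn₀ hr1 hn₀, if_pos rfl])
    (by rw [Ring.lie_def, hef (r + 1) (r + 1) h₁ hn₁ h₁ hn₁, if_pos rfl])
    (by rw [Ring.lie_def, hhe r r hr1 hn₀ hr1 hn₀, cartan_self]; simp [two_smul])
    (by rw [Ring.lie_def, hhe (r + 1) r h₁ hn₁ hr1 hn₀, cartan_succ_left]; simp)
    (by rw [Ring.lie_def, hhf r (r + 1) hr1 hn₀ h₁ hn₁, cartan_succ_right]; simp)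
    (by rw [Ring.lie_def, hhf (r + 1) (r + 1) h₁ hn₁ h₁ hn₁, cartan_self]; simp [two_smul])
    (by rw [← serre_eq_lie_lie, hserre_e r (r + 1) hr1 hn₀ h₁ hn₁ (cartan_succ_right r)])
    (by rw [← serre_eq_lie_lie, hserre_f (r + 1) r h₁ hn₁ hr1 hn₀ (cartan_succ_left r)])]
  rw [nsmul_eq_mul, Nat.cast_ofNat]

/-- In `U(sl_n)` for `n = 2r+1` odd, with `e_{i,θ} = e_i + f_{n−i}`, the nonhomogeneous
Serre relation holds for the middle pair:
`e_{r,θ}² e_{r+1,θ} − 2 e_{r,θ} e_{r+1,θ} e_{r,θ} + e_{r+1,θ} e_{r,θ}² = −4 e_{r,θ}`. -/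
theorem middle_nonhomogeneous_serre (n r : ℕ) (hr : n = 2 * r + 1) (hr1 : 1 ≤ r)
    (R : Type) [Ring R] [Algebra ℚ R] (e f h : ℕ → R)
    (hhh : ∀ i j, 1 ≤ i → i ≤ n - 1 → 1 ≤ j → j ≤ n - 1 → h i * h j = h j * h i)
    (hhe : ∀ i j, 1 ≤ i → i ≤ n - 1 → 1 ≤ j → j ≤ n - 1 →
      h i * e j - e j * h i = ((cartan i j : ℚ)) • e j)
    (hhf : ∀ i j, 1 ≤ i → i ≤ n - 1 → 1 ≤ j → j ≤ n - 1 →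
      h i * f j - f j * h i = (-(cartan i j : ℚ)) • f j)
    (hef : ∀ i j, 1 ≤ i → i ≤ n - 1 → 1 ≤ j → j ≤ n - 1 →
      e i * f j - f j * e i = if i = j then h i else 0)
    (hee0 : ∀ i j, 1 ≤ i → i ≤ n - 1 → 1 ≤ j → j ≤ n - 1 → cartan i j = 0 →
      e i * e j = e j * e i)
    (hff0 : ∀ i j, 1 ≤ i → i ≤ n - 1 → 1 ≤ j → j ≤ n - 1 → cartan i j = 0 →
      f i * f j = f j * f i)
    (hserre_e : ∀ i j, 1 ≤ i → i ≤ n - 1 → 1 ≤ j → j ≤ n - 1 → cartan i j = -1 →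
      e i * e i * e j - 2 * (e i * e j * e i) + e j * (e i * e i) = 0)
    (hserre_f : ∀ i j, 1 ≤ i → i ≤ n - 1 → 1 ≤ j → j ≤ n - 1 → cartan i j = -1 →
      f i * f i * f j - 2 * (f i * f j * f i) + f j * (f i * f i) = 0) :
    (e r + f (r + 1)) * (e r + f (r + 1)) * (e (r + 1) + f r)
      - 2 * ((e r + f (r + 1)) * (e (r + 1) + f r) * (e r + f (r + 1)))
      + (e (r + 1) + f r) * ((e r + f (r + 1)) * (e r + f (r + 1)))
      = -(4 * (e r + f (r + 1))) :=
  middle_nonhomogeneous_serre_general n r hr hr1 R e f h hhe hhf hef hserre_e hserre_f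
end

section
/- In U(sl₃) with Chevalley generators e₁,e₂,f₁,f₂,h₁,h₂, set E = e₁ + f₂, F = f₁ + e₂, H = h₁ − h₂. Then [H,E] = 3E, [H,F] = −3F, and E²F − 2EFE + FE² = −4E, F²E − 2FEF + EF² = −4F. -/
/-- In `U(sl₃)` with Chevalley generators `e₁,e₂,f₁,f₂,h₁,h₂`, setting
`E = e₁ + f₂`, `F = f₁ + e₂`, `H = h₁ − h₂`, one has `[H,E] = 3E`, `[H,F] = −3F`,
`E²F − 2EFE + FE² = −4E` and `F²E − 2FEF + EF² = −4F`. -/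
theorem sl3_theta_relations (R : Type) [Ring R] [Algebra ℚ R]
    (e1 e2 f1 f2 h1 h2 : R)
    (hh : h1 * h2 = h2 * h1)
    (h1e1 : h1 * e1 - e1 * h1 = 2 * e1)
    (h1e2 : h1 * e2 - e2 * h1 = -e2)
    (h2e1 : h2 * e1 - e1 * h2 = -e1)
    (h2e2 : h2 * e2 - e2 * h2 = 2 * e2)
    (h1f1 : h1 * f1 - f1 * h1 = -(2 * f1))
    (h1f2 : h1 * f2 - f2 * h1 = f2)
    (h2f1 : h2 * f1 - f1 * h2 = f1)
    (h2f2 : h2 * f2 - f2 * h2 = -(2 * f2))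
    (e1f1 : e1 * f1 - f1 * e1 = h1)
    (e1f2 : e1 * f2 - f2 * e1 = 0)
    (e2f1 : e2 * f1 - f1 * e2 = 0)
    (e2f2 : e2 * f2 - f2 * e2 = h2)
    (serre_e12 : e1 * e1 * e2 - 2 * (e1 * e2 * e1) + e2 * (e1 * e1) = 0)
    (serre_e21 : e2 * e2 * e1 - 2 * (e2 * e1 * e2) + e1 * (e2 * e2) = 0)
    (serre_f12 : f1 * f1 * f2 - 2 * (f1 * f2 * f1) + f2 * (f1 * f1) = 0)
    (serre_f21 : f2 * f2 * f1 - 2 * (f2 * f1 * f2) + f1 * (f2 * f2) = 0) :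
    ((h1 - h2) * (e1 + f2) - (e1 + f2) * (h1 - h2) = 3 * (e1 + f2)) ∧
    ((h1 - h2) * (f1 + e2) - (f1 + e2) * (h1 - h2) = -(3 * (f1 + e2))) ∧
    ((e1 + f2) * (e1 + f2) * (f1 + e2) - 2 * ((e1 + f2) * (f1 + e2) * (e1 + f2))
      + (f1 + e2) * ((e1 + f2) * (e1 + f2)) = -(4 * (e1 + f2))) ∧
    ((f1 + e2) * (f1 + e2) * (e1 + f2) - 2 * ((f1 + e2) * (e1 + f2) * (f1 + e2))
      + (e1 + f2) * ((f1 + e2) * (f1 + e2)) = -(4 * (f1 + e2))) := by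
  refine ⟨?_, ?_, ?_, ?_⟩
  · linear_combination (norm := noncomm_ring) h1e1 + h1f2 - h2e1 - h2f2
  · linear_combination (norm := noncomm_ring) h1f1 + h1e2 - h2f1 - h2e2
  · linear_combination (norm := noncomm_ring)
      (e1 + f2) * e1f1 - e1f1 * (e1 + f2) - ((e1 + f2) * e2f2 - e2f2 * (e1 + f2))
      - h1e1 - h1f2 + h2e1 + h2f2
      + serre_e12 - e1f2 * e2 - e1 * e2f2 + e2f2 * e1 + e2 * e1f2
      + serre_f21 + h2e1 + e1f2 * f1 + f2 * e1f1 - e1f1 * f2 - f1 * e1f2 - h1f2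
  · linear_combination (norm := noncomm_ring)
      (f1 + e2) * e2f2 - e2f2 * (f1 + e2) - ((f1 + e2) * e1f1 - e1f1 * (f1 + e2))
      - h2e2 - h2f1 + h1e2 + h1f1
      + serre_e21 - e2f1 * e1 - e2 * e1f1 + e1f1 * e2 + e1 * e2f1
      + serre_f12 + h1e2 + e2f1 * f2 + f1 * e2f2 - e2f2 * f1 - f2 * e2f1 - h2f1
end
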